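/- Let K be a field and let (p₁,…,p_m) be a σ-basis of a Hermite–Padé interpolation problem over K. For every integer δ, let L^σ_δ denote the set of solutions with defect strictly larger than −δ (together with the zero vector). Then L^σ_δ is a K-vector space spanned by the vectors x^j·p_r with 1 ≤ r ≤ m and 0 ≤ j < defect(p_r) + δ, and its dimension over K equals Σ_{r=1}^m max(defect(p_r) + δ, 0). -/

import Mathlib

open Polynomial

/-- The term `nᵢ - deg pᵢ` entering the defect, valued `⊤` when `pᵢ = 0`
(i.e. when `deg pᵢ = -∞`). -/
def defectTerm {K : Type*} [Semiring K] (ni : ℕ) (p : K[X]) : WithTop ℤ :=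
  WithBot.recBotCoe (⊤ : WithTop ℤ) (fun d : ℕ => (((ni : ℤ) - (d : ℤ) : ℤ) : WithTop ℤ)) p.degree

/-- The defect of a polynomial vector `p` with respect to the degree bounds `n`:
the minimum of `nᵢ - deg pᵢ` over all components (components with `pᵢ = 0`
contribute `⊤` and hence do not affect the minimum unless `p = 0`). -/
def defect {K : Type*} [Semiring K] {m : ℕ} (n : Fin m → ℕ) (p : Fin m → K[X]) : WithTop ℤ :=
  Finset.univ.inf fun i => defectTerm (n i) (p i)

/-- `p` is a solution of the Hermite–Padé interpolation problem given by the
power series `f` and the order `σ`: the coefficient of `x^k` in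
`p₁·f₁ + ⋯ + p_m·f_m` vanishes for all `k < σ`, i.e. `ord (p·f) ≥ σ`. -/
def IsSolution {K : Type*} [CommSemiring K] {m : ℕ} (f : Fin m → PowerSeries K) (σ : ℕ)
    (p : Fin m → K[X]) : Prop :=
  ∀ k < σ, PowerSeries.coeff k (∑ i, (p i : PowerSeries K) * f i) = 0

/-- `i` is the critical index of `p`: the least index at which the defect is attained. -/
def IsCriticalIndex {K : Type*} [Semiring K] {m : ℕ} (n : Fin m → ℕ) (p : Fin m → K[X])
    (i : Fin m) : Prop :=
  defectTerm (n i) (p i) = defect n p ∧ ∀ j : Fin m, j < i → defectTerm (n j) (p j) ≠ defect n p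

/-- `p` is normalised: its component at its critical index is monic. -/
def IsNormalisedVec {K : Type*} [Semiring K] {m : ℕ} (n : Fin m → ℕ) (p : Fin m → K[X]) : Prop :=
  ∃ i : Fin m, IsCriticalIndex n p i ∧ (p i).Monic

/-- `p` is reduced with respect to `q`: at the critical index `j` of `q` we have
`deg p_j < deg q_j`. -/
def ReducedWrt {K : Type*} [Semiring K] {m : ℕ} (n : Fin m → ℕ) (p q : Fin m → K[X]) : Prop :=
  ∀ j : Fin m, IsCriticalIndex n q j → (p j).degree < (q j).degree

/-- A sequence of polynomial vectors is sorted if for `r < s` either the defect of `P r`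
is strictly larger than that of `P s`, or the defects agree and the critical index of
`P r` is smaller than that of `P s`. -/
def IsSortedSeq {K : Type*} [Semiring K] {m : ℕ} (n : Fin m → ℕ)
    (P : Fin m → Fin m → K[X]) : Prop :=
  ∀ r s : Fin m, r < s →
    defect n (P s) < defect n (P r) ∨
      (defect n (P r) = defect n (P s) ∧
        ∀ i j : Fin m, IsCriticalIndex n (P r) i → IsCriticalIndex n (P s) j → i < j)

/-- A sequence of polynomial vectors is normalised if it is sorted, pairwise reduced,
and all its members are normalised. -/
def IsNormalisedSeq {K : Type*} [Semiring K] {m : ℕ} (n : Fin m → ℕ)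
    (P : Fin m → Fin m → K[X]) : Prop :=
  IsSortedSeq n P ∧ (∀ r s : Fin m, r ≠ s → ReducedWrt n (P r) (P s)) ∧
    ∀ r, IsNormalisedVec n (P r)

/-- `P` is a σ-basis of the Hermite–Padé interpolation problem given by `f`, `n` and `σ`:
every member is a solution, every solution `q` has a unique representation
`q = Σ_r α_r • P_r`, and in this representation `defect q ≤ defect (P r) - deg (α r)`
(written additively as `defect q + deg (α r) ≤ defect (P r)`) whenever `α r ≠ 0`. -/
def IsSigmaBasis {K : Type*} [CommRing K] {m : ℕ} (f : Fin m → PowerSeries K)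
    (n : Fin m → ℕ) (σ : ℕ) (P : Fin m → Fin m → K[X]) : Prop :=
  (∀ r, IsSolution f σ (P r)) ∧
    ∀ q : Fin m → K[X], IsSolution f σ q →
      (∃! α : Fin m → K[X], ∀ i, q i = ∑ r, α r * P r i) ∧
      ∀ α : Fin m → K[X], (∀ i, q i = ∑ r, α r * P r i) →
        ∀ r, α r ≠ 0 →
          defect n q + (((α r).natDegree : ℤ) : WithTop ℤ) ≤ defect n (P r)

/-!
A σ-basis is a `K[X]`-basis of the module of solutions, and its defect condition says that a
solution `q = Σ αᵣ • Pᵣ` with `-δ < defect q` has `deg αᵣ < defect Pᵣ + δ` for every `r`.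
Conversely `defect (xʲ • Pᵣ) = defect Pᵣ - j`, and `c < defect q` is a componentwise degree
bound, so it is preserved by `K`-linear combinations. Hence `L^σ_δ` is the image of
`Πᵣ K[X]_{< defect Pᵣ + δ}` under the injective map `α ↦ Σ αᵣ • Pᵣ`, which gives both the
spanning set and the dimension.
-/

section Defect

variable {R : Type*} [Semiring R] {m : ℕ}

@[simp]
theorem defectTerm_zero (ni : ℕ) : defectTerm ni (0 : R[X]) = ⊤ := by
  simp [defectTerm]

theorem defectTerm_of_ne_zero (ni : ℕ) {p : R[X]} (hp : p ≠ 0) :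
    defectTerm ni p = (((ni : ℤ) - p.natDegree : ℤ) : WithTop ℤ) := by
  rw [defectTerm, degree_eq_natDegree hp]
  rfl

theorem coe_lt_defectTerm_iff (ni : ℕ) (p : R[X]) (c : ℤ) :
    (c : WithTop ℤ) < defectTerm ni p ↔ p ∈ degreeLT R ((ni : ℤ) - c).toNat := by
  rcases eq_or_ne p 0 with rfl | hp
  · simp
  · rw [defectTerm_of_ne_zero ni hp, mem_degreeLT, degree_eq_natDegree hp, Nat.cast_lt,
      WithTop.coe_lt_coe, Int.lt_toNat]
    omega

theorem coe_lt_defect_iff (n : Fin m → ℕ) (q : Fin m → R[X]) (c : ℤ) :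
    (c : WithTop ℤ) < defect n q ↔ ∀ i, q i ∈ degreeLT R ((n i : ℤ) - c).toNat := by
  simp [defect, Finset.lt_inf_iff (WithTop.coe_lt_top c), coe_lt_defectTerm_iff]

theorem defect_smul_add_natDegree [NoZeroDivisors R] (n : Fin m → ℕ) {a : R[X]} (ha : a ≠ 0)
    (p : Fin m → R[X]) : defect n (a • p) + (a.natDegree : ℤ) = defect n p := by
  have hterm : ∀ i, defectTerm (n i) (a * p i) + (a.natDegree : ℤ) = defectTerm (n i) (p i) := by
    intro i
    rcases eq_or_ne (p i) 0 with hpi | hpi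
    · simp [hpi]
    · rw [defectTerm_of_ne_zero _ (mul_ne_zero ha hpi), defectTerm_of_ne_zero _ hpi,
        natDegree_mul ha hpi, ← WithTop.coe_add]
      congr 1
      push_cast
      ring
  rw [defect, Finset.apply_inf_eq_inf_comp_of_linearOrder (· + ((a.natDegree : ℤ) : WithTop ℤ))
    (fun _ _ h => add_le_add_left h _) (WithTop.top_add _)]
  exact Finset.inf_congr rfl fun i _ => hterm i

noncomputable def defectGtSubmodule (n : Fin m → ℕ) (c : ℤ) : Submodule R (Fin m → R[X]) :=
  Submodule.pi Set.univ fun i => degreeLT R ((n i : ℤ) - c).toNat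

theorem mem_defectGtSubmodule {n : Fin m → ℕ} {c : ℤ} {q : Fin m → R[X]} :
    q ∈ defectGtSubmodule n c ↔ (c : WithTop ℤ) < defect n q := by
  simp [defectGtSubmodule, Submodule.mem_pi, coe_lt_defect_iff]

end Defect

section Solution

variable {R : Type*} [CommSemiring R] {m : ℕ}

theorem isSolution_iff_X_pow_dvd (f : Fin m → PowerSeries R) (σ : ℕ) (p : Fin m → R[X]) :
    IsSolution f σ p ↔ PowerSeries.X ^ σ ∣ ∑ i, (p i : PowerSeries R) * f i :=
  PowerSeries.X_pow_dvd_iff.symm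

def solutionSubmodule (f : Fin m → PowerSeries R) (σ : ℕ) : Submodule R[X] (Fin m → R[X]) where
  carrier := {p | IsSolution f σ p}
  zero_mem' := by simp [isSolution_iff_X_pow_dvd]
  add_mem' {p q} (hp : IsSolution f σ p) (hq : IsSolution f σ q) := by
    change IsSolution f σ (p + q)
    rw [isSolution_iff_X_pow_dvd] at *
    simpa [add_mul, Finset.sum_add_distrib] using dvd_add hp hq
  smul_mem' a p (hp : IsSolution f σ p) := by
    change IsSolution f σ (a • p)
    rw [isSolution_iff_X_pow_dvd] at *
    simpa [mul_assoc, ← Finset.mul_sum] using dvd_mul_of_dvd_right hp (a : PowerSeries R)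

theorem mem_solutionSubmodule {f : Fin m → PowerSeries R} {σ : ℕ} {p : Fin m → R[X]} :
    p ∈ solutionSubmodule f σ ↔ IsSolution f σ p :=
  Iff.rfl

end Solution

section XPowSmul

variable {R M : Type*} [CommRing R] [AddCommGroup M] [Module R[X] M] [Module R M]
  [IsScalarTower R R[X] M]

theorem smul_mem_span_of_mem_degreeLT {s : Set M} {v : M} {N : ℕ}
    (hs : ∀ j < N, (X ^ j : R[X]) • v ∈ s) {a : R[X]} (ha : a ∈ degreeLT R N) :
    a • v ∈ Submodule.span R s := by
  classical
  rw [degreeLT_eq_span_X_pow] at ha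
  induction ha using Submodule.span_induction with
  | mem x hx =>
    obtain ⟨j, hj, rfl⟩ := by simpa using hx
    exact Submodule.subset_span (hs j hj)
  | zero => simp
  | add x y _ _ hx hy => rw [add_smul]; exact add_mem hx hy
  | smul c x _ hx => rw [smul_assoc]; exact Submodule.smul_mem _ c hx

theorem LinearIndependent.X_pow_smul {ι : Type*} {v : ι → M} (hv : LinearIndependent R[X] v) :
    LinearIndependent R fun p : ℕ × ι => (X ^ p.1 : R[X]) • v p.2 := by
  have hX : LinearIndependent R fun j : ℕ => (X ^ j : R[X]) := by
    simpa [coe_basisMonomials, X_pow_eq_monomial] using (basisMonomials R).linearIndependent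
  exact linearIndependent_smul hX hv

theorem finrank_span_X_pow_smul [Nontrivial R] {ι : Type*} [Fintype ι] {v : ι → M}
    (hv : LinearIndependent R[X] v) (N : ι → ℤ) :
    Module.finrank R (Submodule.span R
      {w : M | ∃ r : ι, ∃ j : ℕ, (j : ℤ) < N r ∧ w = (X ^ j : R[X]) • v r}) =
      ∑ r, (N r).toNat := by
  let e : (Σ r, Fin (N r).toNat) → ℕ × ι := fun x => ((x.2 : ℕ), x.1)
  have he : e.Injective := by
    rintro ⟨r, j⟩ ⟨s, k⟩ h
    obtain ⟨hjk, rfl⟩ : (j : ℕ) = k ∧ r = s := Prod.mk.inj h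
    rw [Fin.ext hjk]
  let b : (Σ r, Fin (N r).toNat) → M := fun x => (X ^ (x.2 : ℕ) : R[X]) • v x.1
  have hb : LinearIndependent R b := hv.X_pow_smul.comp e he
  have hrange : Set.range b = {w | ∃ r, ∃ j : ℕ, (j : ℤ) < N r ∧ w = (X ^ j : R[X]) • v r} := by
    ext w
    constructor
    · rintro ⟨⟨r, j⟩, rfl⟩
      exact ⟨r, j, Int.lt_toNat.1 j.2, rfl⟩
    · rintro ⟨r, j, hj, rfl⟩
      exact ⟨⟨r, ⟨j, Int.lt_toNat.2 hj⟩⟩, rfl⟩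
  rw [← hrange, finrank_span_eq_card hb, Fintype.card_sigma]
  simp

end XPowSmul

theorem eq_sum_smul_iff {R ι κ : Type*} [Semiring R] [Fintype κ] {q : ι → R[X]}
    {α : κ → R[X]} {P : κ → ι → R[X]} :
    q = ∑ r, α r • P r ↔ ∀ i, q i = ∑ r, α r * P r i := by
  simp [funext_iff, Finset.sum_apply]

namespace IsSigmaBasis

variable {R : Type*} [CommRing R] {m : ℕ} {f : Fin m → PowerSeries R} {n : Fin m → ℕ} {σ : ℕ}
  {P : Fin m → Fin m → R[X]}

theorem linearIndependent (hP : IsSigmaBasis f n σ P) : LinearIndependent R[X] P := by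
  refine Fintype.linearIndependent_iff.2 fun g hg => congrFun ?_
  exact (hP.2 0 (solutionSubmodule f σ).zero_mem).1.unique (eq_sum_smul_iff.1 hg.symm)
    (eq_sum_smul_iff.1 (by simp))

theorem exists_repr_mem_degreeLT (hP : IsSigmaBasis f n σ P) {d : Fin m → ℤ}
    (hd : ∀ r, defect n (P r) = d r) {q : Fin m → R[X]} (hq : IsSolution f σ q) {c : ℤ}
    (hc : (c : WithTop ℤ) < defect n q) :
    ∃ α : Fin m → R[X], q = ∑ r, α r • P r ∧ ∀ r, α r ∈ degreeLT R (d r - c).toNat := by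
  obtain ⟨⟨α, hα, -⟩, hbound⟩ := hP.2 q hq
  refine ⟨α, eq_sum_smul_iff.2 hα, fun r => ?_⟩
  rcases eq_or_ne (α r) 0 with hr | hr
  · simp [hr]
  have hlt : ((c + (α r).natDegree : ℤ) : WithTop ℤ) < d r :=
    calc ((c + (α r).natDegree : ℤ) : WithTop ℤ)
        = (c : WithTop ℤ) + (((α r).natDegree : ℤ) : WithTop ℤ) := WithTop.coe_add _ _
      _ < defect n q + (((α r).natDegree : ℤ) : WithTop ℤ) :=
        WithTop.add_lt_add_right WithTop.coe_ne_top hc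
      _ ≤ d r := hd r ▸ hbound α hα r hr
  rw [mem_degreeLT, degree_eq_natDegree hr, Nat.cast_lt, Int.lt_toNat]
  have := WithTop.coe_lt_coe.1 hlt
  omega

theorem span_X_pow_smul_eq [IsDomain R] (hP : IsSigmaBasis f n σ P) {d : Fin m → ℤ}
    (hd : ∀ r, defect n (P r) = d r) (δ : ℤ) :
    Submodule.span R
        {v : Fin m → R[X] | ∃ r : Fin m, ∃ j : ℕ, (j : ℤ) < d r + δ ∧ v = (X ^ j : R[X]) • P r} =
      (solutionSubmodule f σ).restrictScalars R ⊓ defectGtSubmodule n (-δ) := by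
  apply le_antisymm
  · rw [Submodule.span_le]
    rintro _ ⟨r, j, hj, rfl⟩
    refine ⟨(solutionSubmodule f σ).smul_mem _ (hP.1 r), mem_defectGtSubmodule.2 ?_⟩
    have hdef := defect_smul_add_natDegree n (pow_ne_zero j X_ne_zero) (P r)
    rw [natDegree_X_pow, hd r] at hdef
    obtain ⟨e, k, he, hk, hek⟩ := WithTop.add_eq_coe.1 hdef
    rw [← he, WithTop.coe_lt_coe]
    have := WithTop.coe_inj.1 hk
    omega
  · rintro q ⟨hq, hdef⟩
    obtain ⟨α, rfl, hα⟩ := hP.exists_repr_mem_degreeLT hd hq (mem_defectGtSubmodule.1 hdef)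
    refine Submodule.sum_mem _ fun r _ => smul_mem_span_of_mem_degreeLT (fun j hj => ?_) (hα r)
    exact ⟨r, j, by omega, rfl⟩

end IsSigmaBasis

theorem sigma_basis_span_and_dimension_general {K : Type*} [Field K] {m : ℕ}
    (f : Fin m → PowerSeries K) (n : Fin m → ℕ) (σ : ℕ)
    (P : Fin m → Fin m → K[X]) (hP : IsSigmaBasis f n σ P)
    (d : Fin m → ℤ) (hd : ∀ r, defect n (P r) = ((d r : ℤ) : WithTop ℤ)) (δ : ℤ) :
    {q : Fin m → K[X] | IsSolution f σ q ∧ ((-δ : ℤ) : WithTop ℤ) < defect n q} =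
        (Submodule.span K
          {v : Fin m → K[X] |
            ∃ r : Fin m, ∃ j : ℕ, (j : ℤ) < d r + δ ∧ v = (X ^ j : K[X]) • P r} :
          Submodule K (Fin m → K[X])) ∧
      Module.finrank K
          (Submodule.span K
            {v : Fin m → K[X] |
              ∃ r : Fin m, ∃ j : ℕ, (j : ℤ) < d r + δ ∧ v = (X ^ j : K[X]) • P r}) =
        ∑ r, (d r + δ).toNat := by
  refine ⟨?_, ?_⟩
  · rw [hP.span_X_pow_smul_eq hd δ]
    ext q
    simp [mem_solutionSubmodule, mem_defectGtSubmodule]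
  · exact finrank_span_X_pow_smul hP.linearIndependent _

/-- **Description of the solution spaces `L^σ_δ` in terms of a σ-basis.**  Let `P` be a
σ-basis (of nonzero vectors, with `defect (P r) = d r ∈ ℤ`) of a Hermite–Padé
interpolation problem over a field `K`, and let `δ ∈ ℤ`.  Then the set `L^σ_δ` of
solutions with defect strictly larger than `-δ` (the zero vector, having defect `⊤`,
belongs to it) is the `K`-vector space spanned by the vectors `x^j • P r` with
`1 ≤ r ≤ m` and `0 ≤ j < d r + δ`, and its dimension over `K` equals
`Σ_r max (d r + δ) 0`. -/
theorem sigma_basis_span_and_dimension {K : Type*} [Field K] {m : ℕ}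
    (f : Fin m → PowerSeries K) (n : Fin m → ℕ) (σ : ℕ)
    (P : Fin m → Fin m → K[X]) (hP : IsSigmaBasis f n σ P) (hP0 : ∀ r, P r ≠ 0)
    (d : Fin m → ℤ) (hd : ∀ r, defect n (P r) = ((d r : ℤ) : WithTop ℤ)) (δ : ℤ) :
    {q : Fin m → K[X] | IsSolution f σ q ∧ ((-δ : ℤ) : WithTop ℤ) < defect n q} =
        (Submodule.span K
          {v : Fin m → K[X] |
            ∃ r : Fin m, ∃ j : ℕ, (j : ℤ) < d r + δ ∧ v = (X ^ j : K[X]) • P r} :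
          Submodule K (Fin m → K[X])) ∧
      Module.finrank K
          (Submodule.span K
            {v : Fin m → K[X] |
              ∃ r : Fin m, ∃ j : ℕ, (j : ℤ) < d r + δ ∧ v = (X ^ j : K[X]) • P r}) =
        ∑ r, (d r + δ).toNat :=
  sigma_basis_span_and_dimension_general f n σ P hP d hd δ
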